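/- Let k be a non-negative integer and let τ be a locally compact Hausdorff shift-continuous topology on B⁰(B_k) in which the adjoined zero 0* is not isolated. Then for any open neighborhoods U, V of 0* whose closures are compact, the equality U ∩ [n,m] = V ∩ [n,m] holds for all but finitely many pairs (n,m) of non-negative integers. -/

import Mathlib

open Ordinal Set Topology

noncomputable section

/-- The `α`-bicyclic monoid: pairs of ordinals below `ω ^ α`. -/
def Bicyclic (α : Ordinal) : Type 1 :=
  {p : Ordinal × Ordinal // p.1 < ω ^ α ∧ p.2 < ω ^ α}

namespace Bicyclic

variable {α : Ordinal}

def mk (a b : Ordinal) (ha : a < ω ^ α) (hb : b < ω ^ α) : Bicyclic α :=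
  ⟨(a, b), ha, hb⟩

instance : Mul (Bicyclic α) :=
  ⟨fun x y =>
    if x.val.2 ≤ y.val.1 then
      ⟨(x.val.1 + (y.val.1 - x.val.2), y.val.2),
        (principal_add_omega0_opow α) x.2.1
          (lt_of_le_of_lt (Ordinal.sub_le_self _ _) y.2.1),
        y.2.2⟩
    else
      ⟨(x.val.1, y.val.2 + (x.val.2 - y.val.1)),
        x.2.1,
        (principal_add_omega0_opow α) y.2.2
          (lt_of_le_of_lt (Ordinal.sub_le_self _ _) x.2.2)⟩⟩

instance : One (Bicyclic α) :=
  ⟨⟨(0, 0), opow_pos α omega0_pos, opow_pos α omega0_pos⟩⟩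

end Bicyclic

/-- The Bruck extension of a semigroup `S`. -/
def Bruck (S : Type*) : Type _ := ℕ × S × ℕ

def Bruck.mk {S : Type*} (n : ℕ) (s : S) (m : ℕ) : Bruck S := (n, s, m)

instance {S : Type*} [Mul S] : Mul (Bruck S) :=
  ⟨fun x y =>
    if x.2.2 < y.1 then (x.1 + y.1 - x.2.2, y.2.1, y.2.2)
    else if y.1 < x.2.2 then (x.1, x.2.1, y.2.2 + x.2.2 - y.1)
    else (x.1, x.2.1 * y.2.1, y.2.2)⟩

/-- The Bruck extension of `S` with an adjoined (absorbing) zero `0*`. -/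
abbrev BruckZero (S : Type*) := WithZero (Bruck S)

/-- The box `[n,m]` in the Bruck extension with zero. -/
def box (S : Type*) (n m : ℕ) : Set (BruckZero S) :=
  {x | ∃ s : S, x = ↑(Bruck.mk n s m)}

/-- A topology on `X` is shift-continuous if all two-sided shifts `x ↦ a * x * b`
are continuous. -/
def ShiftContinuous (X : Type*) [Mul X] [TopologicalSpace X] : Prop :=
  ∀ a b : X, Continuous fun x => a * x * b


/-!
Write `e n = (n, 1, n)`. Left multiplication by `e n` fixes every element of the boxes `[p, q]`
with `p ≥ n` but moves every element with `p < n`; symmetrically on the right. In a Hausdorff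
space the points moved by a continuous map form an open set, so a nonzero point `x` in `[a, b]`
has a neighbourhood moved both by `y ↦ e (a + 1) * y` and by `y ↦ y * e (b + 1)`, which can only
meet the finitely many boxes `[p, q]` with `p ≤ a` and `q ≤ b`. A compact set avoiding `0*` is
covered by finitely many such neighbourhoods; `closure U \ V` and `closure V \ U` are such sets,
and off the boxes they meet `U` and `V` agree.
-/

namespace Bicyclic

variable {α : Ordinal}

lemma val_mul (x y : Bicyclic α) : (x * y).val =
    if x.val.2 ≤ y.val.1 then (x.val.1 + (y.val.1 - x.val.2), y.val.2)
    else (x.val.1, y.val.2 + (x.val.2 - y.val.1)) := by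
  show Subtype.val (ite _ _ _) = _
  split_ifs <;> rfl

lemma val_one : (1 : Bicyclic α).val = (0, 0) := rfl

instance : MulOneClass (Bicyclic α) where
  one_mul t := Subtype.ext <| by simp [val_mul, val_one]
  mul_one t := Subtype.ext <| by
    rw [val_mul, val_one]
    split_ifs with h
    · exact Prod.ext (by simp) (nonpos_iff_eq_zero.mp h).symm
    · simp

end Bicyclic

namespace Bruck

variable {S : Type*} [MulOneClass S]

lemma mk_mul_mk (a b c d : ℕ) (s t : S) : mk a s b * mk c t d =
    if b < c then mk (a + c - b) t d
    else if c < b then mk a s (d + b - c)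
    else mk a (s * t) d := rfl

lemma mk_one_mul_of_le {n a b : ℕ} (s : S) (h : n ≤ a) : mk n 1 n * mk a s b = mk a s b := by
  rw [mk_mul_mk]
  rcases h.lt_or_eq with h | rfl
  · simp [h]
  · simp

lemma mul_mk_one_of_le {n a b : ℕ} (s : S) (h : n ≤ b) : mk a s b * mk n 1 n = mk a s b := by
  rw [mk_mul_mk]
  rcases h.lt_or_eq with h | rfl
  · simp [h, h.not_gt]
  · simp

lemma mul_mk_zero_one_zero (z : Bruck S) : z * mk 0 1 0 = z :=
  mul_mk_one_of_le z.2.1 (Nat.zero_le z.2.2)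

lemma mk_zero_one_zero_mul (z : Bruck S) : mk 0 1 0 * z = z :=
  mk_one_mul_of_le z.2.1 (Nat.zero_le z.1)

lemma mk_one_mul_ne_of_lt {n a b : ℕ} (s : S) (h : a < n) : mk n 1 n * mk a s b ≠ mk a s b := by
  rw [mk_mul_mk, if_neg h.not_gt, if_pos h]
  intro heq
  exact h.ne' (congrArg Prod.fst heq)

lemma mul_mk_one_ne_of_lt {n a b : ℕ} (s : S) (h : b < n) : mk a s b * mk n 1 n ≠ mk a s b := by
  rw [mk_mul_mk, if_pos h]
  intro heq
  exact h.ne' (congrArg (·.2.2) heq)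

end Bruck

namespace BruckZero

open Bruck

variable {S : Type*}

def boxesMeeting (W : Set (BruckZero S)) : Set (ℕ × ℕ) :=
  {p | (W ∩ box S p.1 p.2).Nonempty}

lemma boxesMeeting_mono {W W' : Set (BruckZero S)} (h : W ⊆ W') :
    boxesMeeting W ⊆ boxesMeeting W' :=
  fun _ ⟨y, hy, hyb⟩ => ⟨y, h hy, hyb⟩

lemma boxesMeeting_union (W W' : Set (BruckZero S)) :
    boxesMeeting (W ∪ W') = boxesMeeting W ∪ boxesMeeting W' := by
  ext p
  simp only [boxesMeeting, mem_ofPred_eq, mem_union, union_inter_distrib_right, union_nonempty]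

lemma setOf_inter_box_ne_subset (U V : Set (BruckZero S)) :
    {p : ℕ × ℕ | U ∩ box S p.1 p.2 ≠ V ∩ box S p.1 p.2} ⊆
      boxesMeeting (U \ V) ∪ boxesMeeting (V \ U) := by
  intro p hp
  by_contra h
  simp only [boxesMeeting, mem_union, mem_ofPred_eq, not_or, not_nonempty_iff_eq_empty,
    eq_empty_iff_forall_notMem, mem_inter_iff, mem_sdiff] at h
  exact hp (Set.ext fun y => by grind)

variable [MulOneClass S] [TopologicalSpace (BruckZero S)] [T2Space (BruckZero S)]

lemma exists_mem_nhds_finite_boxesMeeting (hτ : ShiftContinuous (BruckZero S)) (a b : ℕ)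
    (s : S) : ∃ N ∈ 𝓝 (↑(mk a s b) : BruckZero S), (boxesMeeting N).Finite := by
  set u : BruckZero S := ↑(mk 0 1 0 : Bruck S)
  set f : BruckZero S → BruckZero S := fun y => ↑(mk (a + 1) 1 (a + 1) : Bruck S) * y * u
  set g : BruckZero S → BruckZero S := fun y => u * y * ↑(mk (b + 1) 1 (b + 1) : Bruck S)
  have hf (p q : ℕ) (t : S) : f ↑(mk p t q) = ↑(mk (a + 1) 1 (a + 1) * mk p t q : Bruck S) := by
    simp only [f, u, ← WithZero.coe_mul, mul_mk_zero_one_zero]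
  have hg (p q : ℕ) (t : S) : g ↑(mk p t q) = ↑(mk p t q * mk (b + 1) 1 (b + 1) : Bruck S) := by
    simp only [g, u, ← WithZero.coe_mul, mk_zero_one_zero_mul]
  have hfx : f ↑(mk a s b) ≠ ↑(mk a s b) := by
    rw [hf, Ne, WithZero.coe_inj]
    exact mk_one_mul_ne_of_lt s a.lt_succ_self
  have hgx : g ↑(mk a s b) ≠ ↑(mk a s b) := by
    rw [hg, Ne, WithZero.coe_inj]
    exact mul_mk_one_ne_of_lt s b.lt_succ_self
  refine ⟨{y | f y ≠ y} ∩ {y | g y ≠ y},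
    Filter.inter_mem ((isOpen_ne_fun (hτ _ _) continuous_id).mem_nhds hfx)
      ((isOpen_ne_fun (hτ _ _) continuous_id).mem_nhds hgx),
    ((finite_Iic a).prod (finite_Iic b)).subset ?_⟩
  rintro ⟨p, q⟩ ⟨y, ⟨hfy, hgy⟩, t, rfl⟩
  refine ⟨mem_Iic.mpr (not_lt.mp fun hp => hfy ?_), mem_Iic.mpr (not_lt.mp fun hq => hgy ?_)⟩
  · rw [hf, mk_one_mul_of_le t hp]
  · rw [hg, mul_mk_one_of_le t hq]

lemma _root_.IsCompact.finite_boxesMeeting (hτ : ShiftContinuous (BruckZero S))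
    {K : Set (BruckZero S)} (hK : IsCompact K) (h0 : (0 : BruckZero S) ∉ K) :
    (boxesMeeting K).Finite := by
  refine hK.induction_on (p := fun W => (boxesMeeting W).Finite) ?_
    (fun W W' h hW' => hW'.subset (boxesMeeting_mono h))
    (fun W W' hW hW' => (boxesMeeting_union W W').symm ▸ hW.union hW') ?_
  · simp [boxesMeeting]
  · intro y hy
    obtain ⟨⟨a, s, b⟩, rfl⟩ := WithZero.ne_zero_iff_exists.mp (ne_of_mem_of_not_mem hy h0)
    obtain ⟨N, hN, hfin⟩ := exists_mem_nhds_finite_boxesMeeting hτ a b s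
    exact ⟨N, mem_nhdsWithin_of_mem_nhds hN, hfin⟩

lemma finite_boxesMeeting_diff (hτ : ShiftContinuous (BruckZero S)) {U V : Set (BruckZero S)}
    (hV : IsOpen V) (h0V : (0 : BruckZero S) ∈ V) (hcU : IsCompact (closure U)) :
    (boxesMeeting (U \ V)).Finite :=
  ((hcU.diff hV).finite_boxesMeeting hτ fun h => h.2 h0V).subset
    (boxesMeeting_mono (sdiff_subset_sdiff_left subset_closure))

end BruckZero

open BruckZero in
theorem neighborhoods_agree_on_cofinitely_many_boxes_general (k : ℕ)
    [TopologicalSpace (BruckZero (Bicyclic k))] [T2Space (BruckZero (Bicyclic k))]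
    (hτ : ShiftContinuous (BruckZero (Bicyclic k)))
    (U V : Set (BruckZero (Bicyclic k)))
    (hU : IsOpen U) (hV : IsOpen V) (h0U : (0 : BruckZero (Bicyclic k)) ∈ U)
    (h0V : (0 : BruckZero (Bicyclic k)) ∈ V)
    (hcU : IsCompact (closure U)) (hcV : IsCompact (closure V)) :
    {p : ℕ × ℕ | U ∩ box (Bicyclic k) p.1 p.2 ≠ V ∩ box (Bicyclic k) p.1 p.2}.Finite :=
  ((finite_boxesMeeting_diff hτ hV h0V hcU).union
    (finite_boxesMeeting_diff hτ hU h0U hcV)).subset (setOf_inter_box_ne_subset U V)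

/-- For a locally compact Hausdorff shift-continuous topology on `B⁰(B_k)`
with non-isolated zero, any two open neighborhoods `U, V` of `0*` with compact closures
satisfy `U ∩ [n,m] = V ∩ [n,m]` for all but finitely many boxes `[n,m]`. -/
theorem neighborhoods_agree_on_cofinitely_many_boxes (k : ℕ)
    [TopologicalSpace (BruckZero (Bicyclic k))] [T2Space (BruckZero (Bicyclic k))]
    [LocallyCompactSpace (BruckZero (Bicyclic k))]
    (hτ : ShiftContinuous (BruckZero (Bicyclic k)))
    (h0 : ¬ IsOpen ({0} : Set (BruckZero (Bicyclic k))))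
    (U V : Set (BruckZero (Bicyclic k)))
    (hU : IsOpen U) (hV : IsOpen V) (h0U : (0 : BruckZero (Bicyclic k)) ∈ U)
    (h0V : (0 : BruckZero (Bicyclic k)) ∈ V)
    (hcU : IsCompact (closure U)) (hcV : IsCompact (closure V)) :
    {p : ℕ × ℕ | U ∩ box (Bicyclic k) p.1 p.2 ≠ V ∩ box (Bicyclic k) p.1 p.2}.Finite :=
  neighborhoods_agree_on_cofinitely_many_boxes_general k hτ U V hU hV h0U h0V hcU hcV
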